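/- For H-bimodules X₀,…,Xₙ, the formulas h·(x⁰⊗⋯⊗xⁿ) = h₍₁₎x⁰S⁻¹(h₍₂ₙ₊₁₎) ⊗ ⋯ ⊗ h₍ₙ₎xⁿ⁻¹S⁻¹(h₍ₙ₊₂₎) ⊗ h₍ₙ₊₁₎xⁿ and (x⁰⊗⋯⊗xⁿ)·h = x⁰⊗⋯⊗xⁿ⁻¹⊗xⁿh define an H-bimodule structure on X₀⊗⋯⊗Xₙ. -/

import Mathlib

/- STATEMENT 6: For H-bimodules X₀,…,Xₙ, the formulas
h·(x⁰⊗⋯⊗xⁿ) = h₍₁₎x⁰S⁻¹(h₍₂ₙ₊₁₎) ⊗ ⋯ ⊗ h₍ₙ₎xⁿ⁻¹S⁻¹(h₍ₙ₊₂₎) ⊗ h₍ₙ₊₁₎xⁿ and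
(x⁰⊗⋯⊗xⁿ)·h = x⁰⊗⋯⊗xⁿ⁻¹⊗(xⁿh) define an H-bimodule structure on X₀⊗⋯⊗Xₙ.
Here the family is indexed so that `X j` is the leg at distance `j` from the last one
(i.e. `X j = X_{n-j}` in the notation of the paper), and the iterated tensor product is
nested as `X n ⊗ (X (n-1) ⊗ (⋯ ⊗ X 0))`. -/

open TensorProduct

noncomputable section

variable (k : Type) [Field k] (H : Type) [Ring H] [HopfAlgebra k H]

def Delta2 : H →ₗ[k] (H ⊗[k] H) ⊗[k] H :=
  (TensorProduct.map Coalgebra.comul LinearMap.id) ∘ₗ Coalgebra.comul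

variable {A B C : Type} [AddCommGroup A] [AddCommGroup B] [AddCommGroup C]
  [Module k A] [Module k B] [Module k C]

def sw3 : (A ⊗[k] B) ⊗[k] C →ₗ[k] (A ⊗[k] C) ⊗[k] B :=
  (TensorProduct.assoc k A C B).symm.toLinearMap
    ∘ₗ (TensorProduct.map LinearMap.id (TensorProduct.comm k B C).toLinearMap)
    ∘ₗ (TensorProduct.assoc k A B C).toLinearMap

variable (X : ℕ → Type) [∀ j, AddCommGroup (X j)] [∀ j, Module k (X j)]
  -- `l j` is the left `H`-action and `r j` the right `H`-action on the bimodule `X j`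
  (l : ∀ j, H →ₗ[k] X j →ₗ[k] X j) (r : ∀ j, H →ₗ[k] X j →ₗ[k] X j)
  (Sinv : H →ₗ[k] H)

/-- The iterated tensor product `X n ⊗ (X (n-1) ⊗ ⋯ ⊗ X 0)`, bundled so that the
module instances are available. -/
def TM : ℕ → ModuleCat k := fun n =>
  Nat.rec (ModuleCat.of k (X 0)) (fun n ih => ModuleCat.of k (X (n + 1) ⊗[k] ih)) n

/-- `(a ⊗ b) ⊗ x ↦ l a (r (Sinv b) x)`, the two-sided action on one leg. -/
def legAct (j : ℕ) : (H ⊗[k] H) ⊗[k] X j →ₗ[k] X j :=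
  TensorProduct.lift (TensorProduct.lift (LinearMap.mk₂ k
    (fun (a b : H) => (l j a) ∘ₗ (r j (Sinv b)))
    (fun a a' b => by simp [map_add, LinearMap.add_comp])
    (fun c a b => by simp [map_smul, LinearMap.smul_comp])
    (fun a b b' => by simp [map_add, LinearMap.comp_add])
    (fun c a b => by simp [map_smul, LinearMap.comp_smul])))

/-- The left diagonal action on `X n ⊗ ⋯ ⊗ X 0`. -/
def lact : ∀ n : ℕ, H ⊗[k] (TM k X n) →ₗ[k] (TM k X n)
  | 0 => TensorProduct.lift (l 0)
  | n + 1 =>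
    (TensorProduct.map (legAct k H X l r Sinv (n + 1)) (lact n))
      ∘ₗ (TensorProduct.tensorTensorTensorComm k (H ⊗[k] H) H (X (n + 1)) (TM k X n)).toLinearMap
      ∘ₗ (TensorProduct.map (sw3 k ∘ₗ Delta2 k H) LinearMap.id)

/-- The right action on `X n ⊗ ⋯ ⊗ X 0` (on the last leg only). -/
def ract : ∀ n : ℕ, (TM k X n) ⊗[k] H →ₗ[k] (TM k X n)
  | 0 => TensorProduct.lift (r 0).flip
  | n + 1 =>
    (TensorProduct.map LinearMap.id (ract n))
      ∘ₗ (TensorProduct.assoc k (X (n + 1)) (TM k X n) H).toLinearMap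


/-! ### Auxiliary: convolution algebra and properties of the antipode -/

section ConvAux

open Coalgebra

variable {R : Type} [CommRing R] {Co Al : Type} [AddCommGroup Co] [Module R Co] [Coalgebra R Co]
  [Ring Al] [Algebra R Al]

/-- Convolution product of linear maps from a coalgebra to an algebra. -/
def conv (f g : Co →ₗ[R] Al) : Co →ₗ[R] Al :=
  LinearMap.mul' R Al ∘ₗ TensorProduct.map f g ∘ₗ Coalgebra.comul

lemma conv_repr (f g : Co →ₗ[R] Al) (c : Co) {ι : Type} (repr : Coalgebra.Repr R c ι) :
    conv f g c = ∑ i ∈ repr.index, f (repr.left i) * g (repr.right i) := by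
  simp [conv, ← repr.eq, map_sum]

/-- The unit of the convolution algebra. -/
def convUnit : Co →ₗ[R] Al := Algebra.linearMap R Al ∘ₗ Coalgebra.counit

lemma conv_unit_left (f : Co →ₗ[R] Al) : conv convUnit f = f := by
  ext c
  have key := Coalgebra.sum_counit_tmul_map_eq f c (repr := ℛ R c)
  have := congrArg (TensorProduct.lid R Al) key
  simp only [map_sum, lid_tmul, one_smul] at this
  rw [conv_repr _ _ _ (ℛ R c), ← this]
  simp [convUnit, Algebra.smul_def]

lemma conv_unit_right (f : Co →ₗ[R] Al) : conv f convUnit = f := by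
  ext c
  have key := Coalgebra.sum_map_tmul_counit_eq f c (repr := ℛ R c)
  have := congrArg (TensorProduct.rid R Al) key
  simp only [map_sum, rid_tmul, one_smul] at this
  rw [conv_repr _ _ _ (ℛ R c), ← this]
  simp [convUnit, Algebra.smul_def, Algebra.commutes, mul_comm]

lemma conv_assoc (f g h : Co →ₗ[R] Al) : conv (conv f g) h = conv f (conv g h) := by
  ext c
  set r := ℛ R c
  set a₁ : (i : r.ι) → Coalgebra.Repr R (r.left i) (Co × Co) := fun i => ℛ R (r.left i)
  set a₂ : (i : r.ι) → Coalgebra.Repr R (r.right i) (Co × Co) := fun i => ℛ R (r.right i)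
  have key := Coalgebra.sum_map_tmul_tmul_eq f g h c (repr := r) (a₁ := a₁) (a₂ := a₂)
  have := congrArg (LinearMap.mul' R Al ∘ₗ LinearMap.lTensor Al (LinearMap.mul' R Al)) key
  simp only [map_sum, LinearMap.comp_apply, LinearMap.lTensor_tmul, LinearMap.mul'_apply] at this
  rw [conv_repr _ _ _ r, conv_repr _ _ _ r]
  calc ∑ i ∈ r.index, conv f g (r.left i) * h (r.right i)
      = ∑ i ∈ r.index, ∑ j ∈ (a₁ i).index,
          f ((a₁ i).left j) * (g ((a₁ i).right j) * h (r.right i)) := by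
        refine Finset.sum_congr rfl fun i _ => ?_
        rw [conv_repr _ _ _ (a₁ i), Finset.sum_mul]
        exact Finset.sum_congr rfl fun j _ => mul_assoc _ _ _
    _ = ∑ i ∈ r.index, ∑ j ∈ (a₂ i).index,
          f (r.left i) * (g ((a₂ i).left j) * h ((a₂ i).right j)) := this.symm
    _ = ∑ i ∈ r.index, f (r.left i) * conv g h (r.right i) := by
        refine Finset.sum_congr rfl fun i _ => ?_
        rw [conv_repr _ _ _ (a₂ i), Finset.mul_sum]

lemma conv_unique (f g m : Co →ₗ[R] Al) (hf : conv f m = convUnit) (hg : conv m g = convUnit) :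
    f = g := by
  have : conv f (conv m g) = conv (conv f m) g := (conv_assoc f m g).symm
  rw [hf, hg, conv_unit_right, conv_unit_left] at this
  exact this

end ConvAux

section AntipodeAux

open Coalgebra

lemma antipode_one' : HopfAlgebra.antipode (R := k) (1 : H) = 1 := by
  have h := HopfAlgebra.mul_antipode_lTensor_comul_apply (R := k) (A := H) (a := 1)
  rw [show Coalgebra.comul (R := k) (1 : H) = (1 : H ⊗[k] H) from
      map_one (Bialgebra.comulAlgHom k H), Algebra.TensorProduct.one_def] at h
  simpa using h

/-- A representation of a product, from representations of the factors. -/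
def Repr.mul {a b : H} {ι κ : Type} (ra : Coalgebra.Repr k a ι) (rb : Coalgebra.Repr k b κ) :
    Coalgebra.Repr k (a * b) (ι × κ) where
  index := ra.index ×ˢ rb.index
  left := fun p => ra.left p.1 * rb.left p.2
  right := fun p => ra.right p.1 * rb.right p.2
  eq := by
    rw [Finset.sum_product]
    rw [show Coalgebra.comul (R := k) (a * b)
        = Coalgebra.comul (R := k) a * Coalgebra.comul (R := k) b from Bialgebra.comul_mul a b,
      ← ra.eq, ← rb.eq, Finset.sum_mul_sum]
    simp [Algebra.TensorProduct.tmul_mul_tmul]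

/-- A representation of a pure tensor in the tensor-product coalgebra. -/
def Repr.tmul {a b : H} {ι κ : Type} (ra : Coalgebra.Repr k a ι) (rb : Coalgebra.Repr k b κ) :
    Coalgebra.Repr k (a ⊗ₜ[k] b) (ι × κ) where
  index := ra.index ×ˢ rb.index
  left := fun p => ra.left p.1 ⊗ₜ[k] rb.left p.2
  right := fun p => ra.right p.1 ⊗ₜ[k] rb.right p.2
  eq := by
    rw [Finset.sum_product]
    show _ = ((TensorProduct.tensorTensorTensorComm k H H H H).toLinearMap ∘ₗ
      TensorProduct.map Coalgebra.comul Coalgebra.comul) (a ⊗ₜ[k] b)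
    rw [LinearMap.comp_apply, TensorProduct.map_tmul, ← ra.eq, ← rb.eq, TensorProduct.sum_tmul]
    rw [map_sum]
    refine Finset.sum_congr rfl fun i _ => ?_
    rw [TensorProduct.tmul_sum, map_sum]
    rfl

lemma antipode_mul' (a b : H) :
    HopfAlgebra.antipode (R := k) (a * b) =
      HopfAlgebra.antipode (R := k) b * HopfAlgebra.antipode (R := k) a := by
  have main : (HopfAlgebra.antipode (R := k) ∘ₗ LinearMap.mul' k H : H ⊗[k] H →ₗ[k] H) =
      (LinearMap.mul' k H ∘ₗ TensorProduct.map (HopfAlgebra.antipode (R := k))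
        (HopfAlgebra.antipode (R := k)) ∘ₗ (TensorProduct.comm k H H).toLinearMap) := by
    apply conv_unique _ _ (LinearMap.mul' k H)
    · apply TensorProduct.ext'
      intro x y
      set rx := ℛ k x; set ry := ℛ k y
      rw [conv_repr _ _ _ (Repr.tmul k H rx ry)]
      have : ∑ p ∈ (Repr.tmul k H rx ry).index,
          (HopfAlgebra.antipode (R := k) ∘ₗ LinearMap.mul' k H)
            ((Repr.tmul k H rx ry).left p) *
          (LinearMap.mul' k H) ((Repr.tmul k H rx ry).right p) =
          ∑ p ∈ (Repr.mul k H rx ry).index,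
            HopfAlgebra.antipode (R := k) ((Repr.mul k H rx ry).left p) *
              (Repr.mul k H rx ry).right p := rfl
      rw [this, HopfAlgebra.sum_antipode_mul_eq_algebraMap_counit]
      simp [convUnit, Bialgebra.counit_mul]
      exact Algebra.commutes _ _
    · apply TensorProduct.ext'
      intro x y
      set rx := ℛ k x; set ry := ℛ k y
      rw [conv_repr _ _ _ (Repr.tmul k H rx ry)]
      show (∑ p ∈ rx.index ×ˢ ry.index,
          rx.left p.1 * ry.left p.2 *
            (HopfAlgebra.antipode (R := k) (ry.right p.2) *
             HopfAlgebra.antipode (R := k) (rx.right p.1))) = _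
      have hterm : ∀ p ∈ rx.index ×ˢ ry.index,
          rx.left p.1 * ry.left p.2 *
            (HopfAlgebra.antipode (R := k) (ry.right p.2) *
             HopfAlgebra.antipode (R := k) (rx.right p.1)) =
          rx.left p.1 * (ry.left p.2 * HopfAlgebra.antipode (R := k) (ry.right p.2)) *
            HopfAlgebra.antipode (R := k) (rx.right p.1) := fun p _ => by
        simp [mul_assoc]
      rw [Finset.sum_congr rfl hterm, Finset.sum_product]
      have inner : ∀ i : rx.ι, ∑ j ∈ ry.index,
          rx.left i * (ry.left j * HopfAlgebra.antipode (R := k) (ry.right j)) *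
            HopfAlgebra.antipode (R := k) (rx.right i) =
          algebraMap k H (Coalgebra.counit (R := k) y) *
            (rx.left i * HopfAlgebra.antipode (R := k) (rx.right i)) := by
        intro i
        rw [← Finset.sum_mul, ← Finset.mul_sum, HopfAlgebra.sum_mul_antipode_eq_algebraMap_counit,
          ← Algebra.commutes, mul_assoc]
      rw [Finset.sum_congr rfl (fun i _ => inner i), ← Finset.mul_sum,
        HopfAlgebra.sum_mul_antipode_eq_algebraMap_counit, ← map_mul]
      simp only [convUnit, LinearMap.comp_apply, Algebra.linearMap_apply]
      rw [show Coalgebra.counit (R := k) (x ⊗ₜ[k] y)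
          = Coalgebra.counit (R := k) x * Coalgebra.counit (R := k) y from by
        simp [mul_comm]]
      rw [map_mul, map_mul]
      exact Algebra.commutes _ _
  exact congr($(main) (a ⊗ₜ[k] b))

lemma Delta2_one : Delta2 k H (1 : H) = (1 ⊗ₜ[k] 1) ⊗ₜ[k] (1 : H) := by
  rw [Delta2, LinearMap.comp_apply,
    show Coalgebra.comul (R := k) (1 : H) = (1 : H ⊗[k] H) from
      map_one (Bialgebra.comulAlgHom k H), Algebra.TensorProduct.one_def,
    TensorProduct.map_tmul,
    show Coalgebra.comul (R := k) (1 : H) = (1 : H ⊗[k] H) from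
      map_one (Bialgebra.comulAlgHom k H), Algebra.TensorProduct.one_def]
  rfl

lemma Delta2_mul (a b : H) : Delta2 k H (a * b) = Delta2 k H a * Delta2 k H b := by
  have hmap : ∀ u : H ⊗[k] H,
      TensorProduct.map (Coalgebra.comul (R := k)) (LinearMap.id (R := k) (M := H)) u =
      Algebra.TensorProduct.map (Bialgebra.comulAlgHom k H) (AlgHom.id k H) u := by
    intro u
    induction u using TensorProduct.induction_on with
    | zero => simp
    | tmul x y => simp [Algebra.TensorProduct.map_tmul]
    | add u v hu hv => simp [map_add, hu, hv]
  simp only [Delta2, LinearMap.comp_apply, Bialgebra.comul_mul, hmap, map_mul]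

end AntipodeAux

/-! ### Auxiliary: unfolding lemmas for `lact` and `ract` -/

attribute [reducible] TM

/-- The action of `(H ⊗ H) ⊗ H` on one more tensor leg. -/
def step (n : ℕ) : ((H ⊗[k] H) ⊗[k] H) ⊗[k] (X (n + 1) ⊗[k] TM k X n)
    →ₗ[k] (X (n + 1) ⊗[k] TM k X n) :=
  (TensorProduct.map (legAct k H X l r Sinv (n + 1)) (lact k H X l r Sinv n))
    ∘ₗ (TensorProduct.tensorTensorTensorComm k (H ⊗[k] H) H (X (n + 1)) (TM k X n)).toLinearMap
    ∘ₗ (TensorProduct.map (sw3 k) LinearMap.id)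

lemma lact_zero (a : H) (x : X 0) :
    lact k H X l r Sinv 0 (a ⊗ₜ[k] x) = l 0 a x := rfl

lemma ract_zero (x : X 0) (b : H) :
    ract k H X r 0 (x ⊗ₜ[k] b) = r 0 b x := rfl

lemma lact_succ_eq (n : ℕ) (a : H) (w : X (n + 1) ⊗[k] TM k X n) :
    lact k H X l r Sinv (n + 1) (a ⊗ₜ[k] w) =
      step k H X l r Sinv n ((Delta2 k H a) ⊗ₜ[k] w) := rfl

lemma step_tmul (n : ℕ) (p q s : H) (x : X (n + 1)) (v : TM k X n) :
    step k H X l r Sinv n (((p ⊗ₜ[k] q) ⊗ₜ[k] s) ⊗ₜ[k] (x ⊗ₜ[k] v)) =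
      (l (n + 1) p (r (n + 1) (Sinv s) x)) ⊗ₜ[k] lact k H X l r Sinv n (q ⊗ₜ[k] v) := rfl

lemma ract_succ_tmul (n : ℕ) (x : X (n + 1)) (v : TM k X n) (b : H) :
    ract k H X r (n + 1) ((x ⊗ₜ[k] v) ⊗ₜ[k] b) =
      x ⊗ₜ[k] ract k H X r n (v ⊗ₜ[k] b) := rfl

/-! ### Key induction-step lemmas -/

lemma key_lunit (n : ℕ) (h1 : Sinv 1 = 1)
    (hl1 : l (n + 1) 1 = LinearMap.id) (hr1 : r (n + 1) 1 = LinearMap.id)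
    (IH : ∀ w : TM k X n, lact k H X l r Sinv n ((1 : H) ⊗ₜ[k] w) = w) :
    ∀ w : X (n + 1) ⊗[k] TM k X n,
      lact k H X l r Sinv (n + 1) ((1 : H) ⊗ₜ[k] w) = w := by
  intro w
  rw [lact_succ_eq, Delta2_one]
  induction w using TensorProduct.induction_on with
  | zero => simp
  | tmul x v => rw [step_tmul, h1, hl1, hr1]; simp [IH v]
  | add w₁ w₂ h₁ h₂ => simp [TensorProduct.tmul_add, h₁, h₂]

lemma key_lassoc (n : ℕ)
    (hSm : ∀ a b : H, Sinv (a * b) = Sinv b * Sinv a)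
    (hlm : ∀ (a b : H), l (n + 1) (a * b) = l (n + 1) a ∘ₗ l (n + 1) b)
    (hrm : ∀ (a b : H), r (n + 1) (a * b) = r (n + 1) b ∘ₗ r (n + 1) a)
    (hlr : ∀ (a b : H), l (n + 1) a ∘ₗ r (n + 1) b = r (n + 1) b ∘ₗ l (n + 1) a)
    (IH : ∀ (a b : H) (w : TM k X n),
      lact k H X l r Sinv n (a ⊗ₜ[k] lact k H X l r Sinv n (b ⊗ₜ[k] w)) =
        lact k H X l r Sinv n ((a * b) ⊗ₜ[k] w)) :
    ∀ (u v : (H ⊗[k] H) ⊗[k] H) (w : X (n + 1) ⊗[k] TM k X n),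
      step k H X l r Sinv n ((u * v) ⊗ₜ[k] w) =
        step k H X l r Sinv n (u ⊗ₜ[k] step k H X l r Sinv n (v ⊗ₜ[k] w)) := by
  intro u v w
  induction u using TensorProduct.induction_on with
  | zero => simp [TensorProduct.zero_tmul]
  | add u₁ u₂ h₁ h₂ => simp [add_mul, TensorProduct.add_tmul, h₁, h₂]
  | tmul pq s =>
    induction pq using TensorProduct.induction_on with
    | zero => simp [TensorProduct.zero_tmul]
    | add pq₁ pq₂ h₁ h₂ => simp [add_mul, TensorProduct.add_tmul, h₁, h₂]
    | tmul p q =>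
      induction v using TensorProduct.induction_on with
      | zero => simp [TensorProduct.zero_tmul]
      | add v₁ v₂ h₁ h₂ => simp [mul_add, TensorProduct.add_tmul, TensorProduct.tmul_add,
          h₁, h₂]
      | tmul pq' s' =>
        induction pq' using TensorProduct.induction_on with
        | zero => simp [TensorProduct.zero_tmul]
        | add a₁ a₂ h₁ h₂ =>
            simp only [mul_add, Algebra.TensorProduct.tmul_mul_tmul, TensorProduct.add_tmul,
              TensorProduct.tmul_add, map_add] at h₁ h₂ ⊢
            rw [h₁, h₂]
        | tmul p' q' =>
          induction w using TensorProduct.induction_on with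
          | zero => simp
          | add w₁ w₂ h₁ h₂ =>
            simp only [Algebra.TensorProduct.tmul_mul_tmul, TensorProduct.tmul_add,
              map_add] at h₁ h₂ ⊢
            rw [h₁, h₂]
          | tmul x t =>
            rw [Algebra.TensorProduct.tmul_mul_tmul, Algebra.TensorProduct.tmul_mul_tmul,
              step_tmul, step_tmul, step_tmul, IH q q' t]
            congr 1
            rw [hSm s s', hrm (Sinv s') (Sinv s), hlm p p']
            simp only [LinearMap.comp_apply]
            have hc : l (n + 1) p' (r (n + 1) (Sinv s) (r (n + 1) (Sinv s') x)) =
                r (n + 1) (Sinv s) (l (n + 1) p' (r (n + 1) (Sinv s') x)) :=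
              congr($(hlr p' (Sinv s)) (r (n + 1) (Sinv s') x))
            rw [hc]

lemma key_runit (n : ℕ)
    (IH : ∀ w : TM k X n, ract k H X r n (w ⊗ₜ[k] (1 : H)) = w) :
    ∀ w : X (n + 1) ⊗[k] TM k X n,
      ract k H X r (n + 1) (w ⊗ₜ[k] (1 : H)) = w := by
  intro w
  induction w using TensorProduct.induction_on with
  | zero => simp
  | tmul x v => rw [ract_succ_tmul, IH v]
  | add w₁ w₂ h₁ h₂ => simp [TensorProduct.add_tmul, h₁, h₂]

lemma key_rassoc (n : ℕ)
    (IH : ∀ (a b : H) (w : TM k X n),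
      ract k H X r n (ract k H X r n (w ⊗ₜ[k] a) ⊗ₜ[k] b) =
        ract k H X r n (w ⊗ₜ[k] (a * b))) :
    ∀ (a b : H) (w : X (n + 1) ⊗[k] TM k X n),
      ract k H X r (n + 1) (ract k H X r (n + 1) (w ⊗ₜ[k] a) ⊗ₜ[k] b) =
        ract k H X r (n + 1) (w ⊗ₜ[k] (a * b)) := by
  intro a b w
  induction w using TensorProduct.induction_on with
  | zero => simp
  | tmul x v => rw [ract_succ_tmul, ract_succ_tmul, ract_succ_tmul, IH a b v]
  | add w₁ w₂ h₁ h₂ => simp [TensorProduct.add_tmul, h₁, h₂]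

lemma key_comm (n : ℕ)
    (IH : ∀ (a b : H) (v : TM k X n),
      ract k H X r n (lact k H X l r Sinv n (a ⊗ₜ[k] v) ⊗ₜ[k] b) =
        lact k H X l r Sinv n (a ⊗ₜ[k] ract k H X r n (v ⊗ₜ[k] b))) :
    ∀ (t : (H ⊗[k] H) ⊗[k] H) (b : H) (w : X (n + 1) ⊗[k] TM k X n),
      ract k H X r (n + 1) (step k H X l r Sinv n (t ⊗ₜ[k] w) ⊗ₜ[k] b) =
        step k H X l r Sinv n (t ⊗ₜ[k] ract k H X r (n + 1) (w ⊗ₜ[k] b)) := by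
  intro t b w
  induction t using TensorProduct.induction_on with
  | zero => simp
  | add t₁ t₂ h₁ h₂ => simp [TensorProduct.add_tmul, h₁, h₂]
  | tmul pq s =>
    induction pq using TensorProduct.induction_on with
    | zero => simp [TensorProduct.zero_tmul]
    | add a₁ a₂ h₁ h₂ => simp [TensorProduct.add_tmul, h₁, h₂]
    | tmul p q =>
      induction w using TensorProduct.induction_on with
      | zero => simp
      | add w₁ w₂ h₁ h₂ => simp [TensorProduct.tmul_add, TensorProduct.add_tmul, h₁, h₂]
      | tmul x v =>
        rw [step_tmul, ract_succ_tmul, IH q b v, ract_succ_tmul, step_tmul]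

theorem statement6
    (hS1 : Sinv ∘ₗ HopfAlgebra.antipode (R := k) = LinearMap.id)
    (hS2 : HopfAlgebra.antipode (R := k) ∘ₗ Sinv = LinearMap.id)
    -- each `X j` is an `H`-bimodule:
    (hl1 : ∀ j, l j 1 = LinearMap.id)
    (hlm : ∀ j (a b : H), l j (a * b) = l j a ∘ₗ l j b)
    (hr1 : ∀ j, r j 1 = LinearMap.id)
    (hrm : ∀ j (a b : H), r j (a * b) = r j b ∘ₗ r j a)
    (hlr : ∀ j (a b : H), l j a ∘ₗ r j b = r j b ∘ₗ l j a) :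
    ∀ n : ℕ,
      -- left unitality and associativity:
      (∀ w : TM k X n, lact k H X l r Sinv n ((1 : H) ⊗ₜ[k] w) = w) ∧
      (∀ (a b : H) (w : TM k X n),
        lact k H X l r Sinv n (a ⊗ₜ[k] lact k H X l r Sinv n (b ⊗ₜ[k] w)) =
          lact k H X l r Sinv n ((a * b) ⊗ₜ[k] w)) ∧
      -- right unitality and associativity:
      (∀ w : TM k X n, ract k H X r n (w ⊗ₜ[k] (1 : H)) = w) ∧
      (∀ (a b : H) (w : TM k X n),
        ract k H X r n (ract k H X r n (w ⊗ₜ[k] a) ⊗ₜ[k] b) =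
          ract k H X r n (w ⊗ₜ[k] (a * b))) ∧
      -- the two actions commute:
      (∀ (a b : H) (w : TM k X n),
        ract k H X r n (lact k H X l r Sinv n (a ⊗ₜ[k] w) ⊗ₜ[k] b) =
          lact k H X l r Sinv n (a ⊗ₜ[k] ract k H X r n (w ⊗ₜ[k] b))) := by
  have hsinj : Function.Injective (HopfAlgebra.antipode (R := k) (A := H)) := by
    intro u v huv
    have hu : Sinv (HopfAlgebra.antipode (R := k) u) = u := congr($(hS1) u)
    have hv : Sinv (HopfAlgebra.antipode (R := k) v) = v := congr($(hS1) v)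
    rw [← hu, ← hv, huv]
  have hSinv_one : Sinv (1 : H) = 1 := by
    have := congr($(hS1) (1 : H))
    rwa [LinearMap.comp_apply, antipode_one' k H, LinearMap.id_apply] at this
  have hSinv_mul : ∀ a b : H, Sinv (a * b) = Sinv b * Sinv a := by
    intro a b
    apply hsinj
    have h1 : HopfAlgebra.antipode (R := k) (Sinv (a * b)) = a * b := congr($(hS2) (a * b))
    have h2 : HopfAlgebra.antipode (R := k) (Sinv b * Sinv a) =
        HopfAlgebra.antipode (R := k) (Sinv a) * HopfAlgebra.antipode (R := k) (Sinv b) :=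
      antipode_mul' k H _ _
    have e1 : HopfAlgebra.antipode (R := k) (Sinv a) = a := congr($(hS2) a)
    have e2 : HopfAlgebra.antipode (R := k) (Sinv b) = b := congr($(hS2) b)
    rw [h1, h2, e1, e2]
  intro n
  induction n with
  | zero =>
    refine ⟨?_, ?_, ?_, ?_, ?_⟩
    · intro w
      rw [lact_zero, hl1 0]; rfl
    · intro a b w
      rw [lact_zero, lact_zero, lact_zero, hlm 0 a b]; rfl
    · intro w
      rw [ract_zero, hr1 0]; rfl
    · intro a b w
      rw [ract_zero, ract_zero, ract_zero, hrm 0 a b]; rfl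
    · intro a b w
      rw [lact_zero, ract_zero, ract_zero, lact_zero]
      exact (congr($(hlr 0 a b) w)).symm
  | succ n IH =>
    obtain ⟨IH1, IH2, IH3, IH4, IH5⟩ := IH
    refine ⟨?_, ?_, ?_, ?_, ?_⟩
    · intro w
      exact key_lunit k H X l r Sinv n hSinv_one (hl1 (n + 1)) (hr1 (n + 1)) IH1 w
    · intro a b w
      rw [lact_succ_eq, lact_succ_eq, lact_succ_eq, Delta2_mul,
        key_lassoc k H X l r Sinv n hSinv_mul (hlm (n + 1)) (hrm (n + 1)) (hlr (n + 1)) IH2]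
    · intro w
      exact key_runit k H X r n IH3 w
    · intro a b w
      exact key_rassoc k H X r n IH4 a b w
    · intro a b w
      rw [lact_succ_eq, lact_succ_eq]
      exact key_comm k H X l r Sinv n IH5 (Delta2 k H a) b w


end
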